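/- arXiv:2601.12484 — 2 statements merged into one kernel-verified Lean document; each statement's English description precedes it below -/
import Mathlib

section
/- The polynomials P̃_n^{(α,c)} satisfy the four-term recurrence x·P̃_n^{(α,c)}(x) = P̃_{n+1}^{(α,c)}(x) + ((c(2n+α+1)+1)/c²)·P̃_n^{(α,c)}(x) + (n(c(α+n)+2)/c³)·P̃_{n-1}^{(α,c)}(x) + (n(n-1)/c⁴)·P̃_{n-2}^{(α,c)}(x) for n ≥ 2. -/
/-- Generalized Laguerre polynomial `L_n^{(α)}(x)` with real parameter `α`. -/
noncomputable def genLaguerre (n : ℕ) (α x : ℝ) : ℝ :=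
  ∑ j ∈ Finset.range (n + 1),
    (-1) ^ j * ((∏ i ∈ Finset.range (n - j), (α + j + 1 + i)) / (Nat.factorial (n - j))) *
      x ^ j / (Nat.factorial j)
open Finset

noncomputable def Rr (a : ℝ) (m : ℕ) : ℝ := ∏ i ∈ range m, (a - m + 1 + i)

lemma Rr_zero : Rr a 0 = 1 := by simp [Rr]

lemma Rr_succ (a : ℝ) (m : ℕ) : Rr a (m+1) = (a - m) * Rr a m := by
  unfold Rr
  rw [prod_range_succ']
  rw [mul_comm]
  congr 1
  · push_cast; ring
  · apply prod_congr rfl; intro i _; push_cast; ring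

lemma Rr_shift (a : ℝ) (m : ℕ) : Rr (a+1) (m+1) = (a+1) * Rr a m := by
  unfold Rr
  rw [prod_range_succ, mul_comm]
  congr 1
  · push_cast; ring
  · apply prod_congr rfl; intro i _; push_cast; ring

lemma Rr_down (a : ℝ) (m : ℕ) : a * Rr (a-1) m = (a - m) * Rr a m := by
  induction m with
  | zero => simp [Rr]
  | succ m ih =>
    rw [Rr_succ, Rr_succ]
    push_cast
    have : a - 1 - m = a - (m+1) := by ring
    rw [this]
    linear_combination (a - (m+1:ℝ)) * ih

lemma Rr_add (a : ℝ) (m : ℕ) : Rr (a+1) m = Rr a m + m * Rr a (m-1) := by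
  cases m with
  | zero => simp [Rr]
  | succ m =>
    rw [Rr_shift, Rr_succ]
    simp only [Nat.add_sub_cancel]
    push_cast; ring

lemma Rr_vanish (n k : ℕ) (h : n < k) : Rr (n:ℝ) k = 0 := by
  unfold Rr
  apply prod_eq_zero (show k - n - 1 ∈ range k by simp; omega)
  have : ((k - n - 1 : ℕ) : ℝ) = (k:ℝ) - n - 1 := by
    have h1 : (n:ℕ) + 1 ≤ k := by omega
    push_cast [Nat.cast_sub h1, Nat.cast_sub (by omega : 1 ≤ k - n), Nat.cast_sub (by omega : n ≤ k)]
    ring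
  rw [this]; ring



noncomputable def Qq (m : ℕ) (b : ℝ) : ℝ := ∏ i ∈ range m, (b + i)

lemma Qq_succ (m : ℕ) (b : ℝ) : Qq (m+1) b = Qq m b * (b + m) := by
  unfold Qq; rw [prod_range_succ]

lemma Qq_succ' (m : ℕ) (b : ℝ) : Qq (m+1) b = b * Qq m (b+1) := by
  unfold Qq
  rw [prod_range_succ']
  rw [mul_comm]
  congr 1
  · simp
  · apply prod_congr rfl; intro i _; push_cast; ring

/-- padded coefficient of `x^j` in `genLaguerre k α`. -/
noncomputable def Tc (k j : ℕ) (α : ℝ) : ℝ :=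
  if j ≤ k then (-1)^j * (Qq (k-j) (α+(j:ℝ)+1) / (Nat.factorial (k-j))) / (Nat.factorial j) else 0

lemma Tc_eval (j t : ℕ) (α : ℝ) :
    Tc (j + t) j α = (-1)^j * (Qq t (α+(j:ℝ)+1) / (Nat.factorial t)) / (Nat.factorial j) := by
  rw [Tc, if_pos (Nat.le_add_right j t)]
  congr 2 <;> rw [Nat.add_sub_cancel_left]

lemma Tc_of_lt (k j : ℕ) (h : k < j) (α : ℝ) : Tc k j α = 0 := by
  rw [Tc, if_neg (by omega)]

lemma genLaguerre_eq (k N : ℕ) (h : k < N) (α x : ℝ) :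
    genLaguerre k α x = ∑ j ∈ range N, Tc k j α * x ^ j := by
  unfold genLaguerre
  rw [← sum_subset (range_subset_range.mpr h)]
  · apply sum_congr rfl
    intro j hj
    rw [Tc, if_pos (by simpa [Nat.lt_succ_iff] using hj)]
    unfold Qq
    ring
  · intro j _ hj
    rw [Tc_of_lt k j (by simp at hj; omega), zero_mul]

lemma fact_ne (m : ℕ) : ((Nat.factorial m : ℝ)) ≠ 0 :=
  Nat.cast_ne_zero.mpr (Nat.factorial_ne_zero m)

lemma keyGen (j t : ℕ) (α : ℝ) :
    (2*((j:ℝ)+t+1)+α+3) * Tc ((j+1)+(t+1)) (j+1) α - (((j:ℝ)+t+1)+2) * Tc ((j+1)+(t+2)) (j+1) α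
      - (((j:ℝ)+t+1)+1+α) * Tc ((j+1)+t) (j+1) α = Tc (j+(t+2)) j α := by
  rw [Tc_eval, Tc_eval, Tc_eval, Tc_eval]
  push_cast
  have e : α + ((j:ℝ)+1) + 1 = (α + (j:ℝ) + 1) + 1 := by ring
  rw [e]
  rw [show t + 2 = (t+1)+1 from rfl, Qq_succ (t+1), Qq_succ t,
    Qq_succ' (t+1) (α+(j:ℝ)+1), Qq_succ t]
  push_cast [Nat.factorial_succ]
  field_simp
  ring

lemma keyEdge1 (k : ℕ) (α : ℝ) :
    (2*(k:ℝ)+α+3) * Tc (k+1) (k+1) α - ((k:ℝ)+2) * Tc (k+2) (k+1) α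
      - ((k:ℝ)+1+α) * Tc k (k+1) α = Tc (k+1) k α := by
  have h1 := Tc_eval (k+1) 0 α
  have h2 := Tc_eval (k+1) 1 α
  have h3 := Tc_eval k 1 α
  norm_num at h1 h2 h3
  rw [Tc_of_lt k (k+1) (by omega), h1, h2, h3]
  simp only [Qq, prod_range_one, prod_range_zero]
  push_cast [Nat.factorial_succ]
  field_simp
  ring

lemma keyEdge2 (k : ℕ) (α : ℝ) :
    (2*(k:ℝ)+α+3) * Tc (k+1) (k+2) α - ((k:ℝ)+2) * Tc (k+2) (k+2) α
      - ((k:ℝ)+1+α) * Tc k (k+2) α = Tc (k+1) (k+1) α := by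
  rw [Tc_of_lt (k+1) (k+2) (by omega), Tc_of_lt k (k+2) (by omega),
    show (k+2) = (k+2)+0 from rfl, Tc_eval, show (k+2)+0+0 = (k+1)+1 from rfl,
    show (k+1) = (k+1)+0 from rfl, Tc_eval]
  push_cast [Nat.factorial_succ]
  simp [Qq]
  field_simp
  ring

lemma keyZero (k : ℕ) (α : ℝ) :
    (2*(k:ℝ)+α+3) * Tc (k+1) 0 α - ((k:ℝ)+2) * Tc (k+2) 0 α
      - ((k:ℝ)+1+α) * Tc k 0 α = 0 := by
  have h1 := Tc_eval 0 (k+1) α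
  have h2 := Tc_eval 0 (k+2) α
  have h3 := Tc_eval 0 k α
  norm_num at h1 h2 h3
  rw [h1, h2, h3]
  rw [show k+2 = (k+1)+1 from rfl, Qq_succ (k+1), Qq_succ k]
  push_cast [Nat.factorial_succ]
  field_simp
  ring

lemma lag_rec0 (α y : ℝ) :
    y * genLaguerre 0 α y = (α+1) * genLaguerre 0 α y - genLaguerre 1 α y := by
  simp [genLaguerre, Finset.sum_range_succ]

lemma lag_rec (k : ℕ) (α y : ℝ) :
    y * genLaguerre (k+1) α y =
      (2*(k:ℝ)+α+3) * genLaguerre (k+1) α y - ((k:ℝ)+2) * genLaguerre (k+2) α y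
        - ((k:ℝ)+1+α) * genLaguerre k α y := by
  have hR : (2*(k:ℝ)+α+3) * genLaguerre (k+1) α y - ((k:ℝ)+2) * genLaguerre (k+2) α y
        - ((k:ℝ)+1+α) * genLaguerre k α y
      = ∑ j ∈ range (k+3), ((2*(k:ℝ)+α+3) * Tc (k+1) j α - ((k:ℝ)+2) * Tc (k+2) j α
          - ((k:ℝ)+1+α) * Tc k j α) * y ^ j := by
    rw [genLaguerre_eq (k+1) (k+3) (by omega), genLaguerre_eq (k+2) (k+3) (by omega),
      genLaguerre_eq k (k+3) (by omega), mul_sum, mul_sum, mul_sum,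
      ← sum_sub_distrib, ← sum_sub_distrib]
    exact sum_congr rfl fun j _ => by ring
  have hL : y * genLaguerre (k+1) α y = ∑ j ∈ range (k+2), Tc (k+1) j α * y ^ (j+1) := by
    rw [genLaguerre_eq (k+1) (k+2) (by omega), mul_sum]
    exact sum_congr rfl fun j _ => by ring
  rw [hL, hR]
  conv_rhs => rw [sum_range_succ']
  have h0 : ((2*(k:ℝ)+α+3) * Tc (k+1) 0 α - ((k:ℝ)+2) * Tc (k+2) 0 α
      - ((k:ℝ)+1+α) * Tc k 0 α) * y ^ 0 = 0 := by rw [keyZero]; ring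
  rw [h0, add_zero]
  refine (sum_congr rfl fun j hj => ?_).symm
  simp only [mem_range] at hj
  have hco : (2*(k:ℝ)+α+3) * Tc (k+1) (j+1) α - ((k:ℝ)+2) * Tc (k+2) (j+1) α
      - ((k:ℝ)+1+α) * Tc k (j+1) α = Tc (k+1) j α := by
    rcases (by omega : j < k ∨ j = k ∨ j = k+1) with h | h | h
    · obtain ⟨t, rfl⟩ : ∃ t, k = j + t + 1 := ⟨k - j - 1, by omega⟩
      have hg := keyGen j t α
      rw [show (j+1)+(t+1) = j+t+1+1 from by omega, show (j+1)+(t+2) = j+t+1+2 from by omega,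
        show (j+1)+t = j+t+1 from by omega, show j+(t+2) = j+t+1+1 from by omega] at hg
      push_cast at hg ⊢
      linear_combination hg
    · rw [h]; exact keyEdge1 k α
    · rw [h]; exact keyEdge2 k α
  rw [hco]

noncomputable def Ssum (n : ℕ) (α c y : ℝ) : ℝ :=
  ∑ k ∈ range (n+1), c^k * (∏ i ∈ range k, ((n : ℝ) - k + 1 + i)) * genLaguerre k α y

lemma Ssum_eq (n N : ℕ) (h : n < N) (α c y : ℝ) :
    Ssum n α c y = ∑ k ∈ range N, c^k * Rr (n:ℝ) k * genLaguerre k α y := by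
  rw [show Ssum n α c y = ∑ k ∈ range (n+1), c^k * Rr (n:ℝ) k * genLaguerre k α y from rfl]
  exact sum_subset (range_subset_range.mpr (by omega)) (fun k _ hk => by
    rw [Rr_vanish n k (by simp at hk; omega)]; ring)

lemma expand (α y : ℝ) (K : ℕ) (u : ℕ → ℝ) (hu : ∀ k, K + 1 ≤ k → u k = 0) :
    ∑ k ∈ range (K+1), u k * (y * genLaguerre k α y)
      = ∑ k ∈ range (K+2), ((2*(k:ℝ)+α+1) * u k - (k:ℝ) * u (k-1)
          - ((k:ℝ)+1+α) * u (k+1)) * genLaguerre k α y := by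
  rw [sum_range_succ']
  have hterm : ∀ k, u (k+1) * (y * genLaguerre (k+1) α y)
      = u (k+1) * ((2*(k:ℝ)+α+3) * genLaguerre (k+1) α y)
        - u (k+1) * (((k:ℝ)+2) * genLaguerre (k+2) α y)
        - u (k+1) * (((k:ℝ)+1+α) * genLaguerre k α y) := by
    intro k; rw [lag_rec]; ring
  rw [sum_congr rfl fun k _ => hterm k, sum_sub_distrib, sum_sub_distrib, lag_rec0]
  rw [show (∑ k ∈ range (K+2), ((2*(k:ℝ)+α+1) * u k - (k:ℝ) * u (k-1)
        - ((k:ℝ)+1+α) * u (k+1)) * genLaguerre k α y)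
      = (∑ k ∈ range (K+2), (2*(k:ℝ)+α+1) * u k * genLaguerre k α y)
        - (∑ k ∈ range (K+2), (k:ℝ) * u (k-1) * genLaguerre k α y)
        - (∑ k ∈ range (K+2), ((k:ℝ)+1+α) * u (k+1) * genLaguerre k α y) from by
    rw [← sum_sub_distrib, ← sum_sub_distrib]; exact sum_congr rfl fun k _ => by ring]
  have hRA : (∑ k ∈ range (K+2), (2*(k:ℝ)+α+1) * u k * genLaguerre k α y)
      = (∑ k ∈ range K, u (k+1) * ((2*(k:ℝ)+α+3) * genLaguerre (k+1) α y))
        + (α+1) * u 0 * genLaguerre 0 α y := by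
    rw [sum_range_succ, hu (K+1) le_rfl, mul_zero, zero_mul, add_zero, sum_range_succ']
    congr 1
    · exact sum_congr rfl fun k _ => by push_cast; ring
    · norm_num
  have hRB : (∑ k ∈ range (K+2), (k:ℝ) * u (k-1) * genLaguerre k α y)
      = (∑ k ∈ range K, u (k+1) * (((k:ℝ)+2) * genLaguerre (k+2) α y))
        + u 0 * genLaguerre 1 α y := by
    rw [sum_range_succ']
    norm_num
    rw [sum_range_succ']
    congr 1
    · exact sum_congr rfl fun k _ => by
        push_cast [Nat.add_sub_cancel]; ring
    · norm_num
  have hRC : (∑ k ∈ range (K+2), ((k:ℝ)+1+α) * u (k+1) * genLaguerre k α y)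
      = ∑ k ∈ range K, u (k+1) * (((k:ℝ)+1+α) * genLaguerre k α y) := by
    rw [sum_range_succ, sum_range_succ, hu (K+2) (by omega), hu (K+1) le_rfl]
    simp only [mul_zero, zero_mul, add_zero]
    exact sum_congr rfl fun k _ => by ring
  rw [hRA, hRB, hRC]
  ring

lemma Ekey (N k : ℕ) (α c : ℝ) :
    (2*(k:ℝ)+α+1) * (c^(k+1) * Rr ((N+2:ℕ):ℝ) k)
      - (k:ℝ) * (c^((k-1)+1) * Rr ((N+2:ℕ):ℝ) (k-1))
      - ((k:ℝ)+1+α) * (c^(k+2) * Rr ((N+2:ℕ):ℝ) (k+1))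
    = -(c^k * Rr ((N+3:ℕ):ℝ) k)
      + (c*(2*((N:ℝ)+2)+α+1)+1) * (c^k * Rr ((N+2:ℕ):ℝ) k)
      - ((N:ℝ)+2)*c*(c*(α+((N:ℝ)+2))+2) * (c^k * Rr ((N+1:ℕ):ℝ) k)
      + ((N:ℝ)+2)*((N:ℝ)+1)*c^2 * (c^k * Rr ((N:ℕ):ℝ) k) := by
  set a : ℝ := (N:ℝ) + 2 with ha
  rw [show ((N+3:ℕ):ℝ) = a + 1 by push_cast; ring, show ((N+2:ℕ):ℝ) = a by push_cast; ring,
    show ((N+1:ℕ):ℝ) = a - 1 by push_cast; ring, show ((N:ℕ):ℝ) = a - 2 by push_cast; ring]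
  rcases k with _ | k
  · have h0 : Rr a 1 = a := by
      rw [show (1:ℕ) = 0 + 1 from rfl, Rr_succ, Rr_zero]; push_cast; ring
    simp only [Nat.zero_sub, Nat.zero_add, Rr_zero, h0]
    push_cast
    ring
  · simp only [Nat.add_sub_cancel]
    have h1 := Rr_succ a (k+1)
    have h2 := Rr_down a (k+1)
    have h3 := Rr_down (a-1) (k+1)
    rw [show a - 1 - 1 = a - 2 by ring] at h3
    have h4 := Rr_add a (k+1)
    simp only [Nat.add_sub_cancel] at h4
    push_cast at h1 h2 h3 h4 ⊢
    linear_combination c^(k+1) * h4 - ((k:ℝ)+2+α) * c^(k+3) * h1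
      + c^(k+2)*(c*(α+a)+2) * h2 - c^(k+3)*a*h3 - c^(k+3)*(a-2-(k:ℝ))*h2

lemma S_rec (N : ℕ) (α c y : ℝ) :
    c * (y * Ssum (N+2) α c y)
      = -Ssum (N+3) α c y + (c*(2*((N:ℝ)+2)+α+1)+1) * Ssum (N+2) α c y
        - ((N:ℝ)+2)*c*(c*(α+((N:ℝ)+2))+2) * Ssum (N+1) α c y
        + ((N:ℝ)+2)*((N:ℝ)+1)*c^2 * Ssum N α c y := by
  have hu : ∀ k, (N+2) + 1 ≤ k → (fun k => c^(k+1) * Rr ((N+2:ℕ):ℝ) k) k = 0 := by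
    intro k hk
    simp only
    rw [Rr_vanish (N+2) k (by omega), mul_zero]
  have hL : c * (y * Ssum (N+2) α c y)
      = ∑ k ∈ range (N+3), (c^(k+1) * Rr ((N+2:ℕ):ℝ) k) * (y * genLaguerre k α y) := by
    rw [Ssum_eq (N+2) (N+3) (by omega), mul_sum, mul_sum]
    exact sum_congr rfl fun k _ => by ring
  rw [hL, expand α y (N+2) _ hu]
  rw [Ssum_eq (N+3) (N+4) (by omega), Ssum_eq (N+2) (N+4) (by omega),
    Ssum_eq (N+1) (N+4) (by omega), Ssum_eq N (N+4) (by omega)]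
  rw [← sum_neg_distrib, mul_sum, mul_sum, mul_sum, ← sum_add_distrib, ← sum_sub_distrib,
    ← sum_add_distrib]
  apply sum_congr rfl
  intro k _
  have := Ekey N k α c
  linear_combination (genLaguerre k α y) * this

/-- `P̃_n^{(α,c)}(x) = ((-1)^n / c^{2n}) ∑_{k=0}^n c^k (n-k+1)_k L_k^{(α)}(c x)`. -/
noncomputable def Pt (n : ℕ) (α c x : ℝ) : ℝ :=
  ((-1) ^ n / c ^ (2 * n)) *
    ∑ k ∈ Finset.range (n + 1),
      c ^ k * (∏ i ∈ Finset.range k, ((n : ℝ) - k + 1 + i)) * genLaguerre k α (c * x)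

lemma Pt_eq (n : ℕ) (α c x : ℝ) :
    Pt n α c x = ((-1)^n / c^(2*n)) * Ssum n α c (c*x) := rfl

theorem Pt_four_term_recurrence (n : ℕ) (hn : 2 ≤ n) (α c x : ℝ) (hc : c ≠ 0) :
    x * Pt n α c x =
      Pt (n + 1) α c x + ((c * (2 * n + α + 1) + 1) / c ^ 2) * Pt n α c x +
        ((n : ℝ) * (c * (α + n) + 2) / c ^ 3) * Pt (n - 1) α c x +
        ((n : ℝ) * ((n : ℝ) - 1) / c ^ 4) * Pt (n - 2) α c x := by
  obtain ⟨N, rfl⟩ : ∃ N, n = N + 2 := ⟨n - 2, by omega⟩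
  simp only [Pt_eq, show N+2-1 = N+1 from rfl, show N+2-2 = N from rfl,
    show N+2+1 = N+3 from rfl]
  have key := S_rec N α c (c*x)
  have hS3 : Ssum (N+3) α c (c*x)
      = (c*(2*((N:ℝ)+2)+α+1)+1) * Ssum (N+2) α c (c*x)
        - ((N:ℝ)+2)*c*(c*(α+((N:ℝ)+2))+2) * Ssum (N+1) α c (c*x)
        + ((N:ℝ)+2)*((N:ℝ)+1)*c^2 * Ssum N α c (c*x)
        - c * (c*x * Ssum (N+2) α c (c*x)) := by linear_combination key
  rw [hS3]
  push_cast
  have h1 : (-1:ℝ)^(N+1) = -(-1)^N := by ring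
  have h2 : (-1:ℝ)^(N+2) = (-1)^N := by ring
  have h3 : (-1:ℝ)^(N+3) = -(-1)^N := by ring
  rw [h2, h3, h1]
  have p1 : c^(2*(N+1)) = c^(2*N)*c^2 := by ring
  have p2 : c^(2*(N+2)) = c^(2*N)*c^4 := by ring
  have p3 : c^(2*(N+3)) = c^(2*N)*c^6 := by ring
  rw [p1, p2, p3]
  have hcn : c^(2*N) ≠ 0 := pow_ne_zero _ hc
  field_simp
  ring
end

section
/- For α > -1 and c > 0, the functions Q̃_n^{(α,c)}(x) := (d^n/dx^n)[w_{α+n,c}(x)], where w_{v,c}(x) = x^{v/2} e^{-cx} I_v(2√x), satisfy the parameter-shift relation Q̃_n^{(α+1,c)}(x) = (1/c)·Q̃_n^{(α,c)}(x) − (1/c)·Q̃_{n+1}^{(α,c)}(x) for all x > 0. -/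
noncomputable def besselI (ν z : ℝ) : ℝ :=
  (z / 2) ^ ν * ∑' i : ℕ, (z ^ 2 / 4) ^ i / (Real.Gamma (i + 1) * Real.Gamma (ν + i + 1))

/-- The weight `w_{v,c}(x) = x^{v/2} e^{-c x} I_v(2√x)`. -/
noncomputable def wBessel (v c x : ℝ) : ℝ :=
  x ^ (v / 2) * Real.exp (-c * x) * besselI v (2 * Real.sqrt x)
/-- `Q̃_n^{(α,c)}(x) = (d^n/dx^n) w_{α+n,c}(x)`. -/
noncomputable def Qt (n : ℕ) (α c x : ℝ) : ℝ :=
  iteratedDeriv n (fun y => wBessel (α + n) c y) x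

/-!
On `x > 0` the weight factors as `w_{v,c}(x) = e^{-cx} x^v S_v(x)` with the entire series
`S_v(x) = ∑ xⁱ / (i! Γ(v+i+1))`. Differentiating termwise and using `Γ(v+i+1) = (v+i) Γ(v+i)`
gives `(x^v S_v)' = x^{v-1} S_{v-1}`, hence `w_{v,c}' = w_{v-1,c} - c w_{v,c}`. Differentiating
this `n` more times at `v = α + n + 1` yields `Q̃_{n+1}^{(α)} = Q̃_n^{(α)} - c Q̃_n^{(α+1)}`.
-/

open Real Filter Set Metric
open scoped Nat Topology

section PowerSeries

variable {a : ℕ → ℝ}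

theorem summable_mul_pow_of_abs_le_inv_factorial (ha : ∀ᶠ i in atTop, |a i| ≤ (i ! : ℝ)⁻¹)
    (y : ℝ) : Summable fun i => a i * y ^ i := by
  refine .of_norm_bounded_eventually_nat (Real.summable_pow_div_factorial |y|) ?_
  filter_upwards [ha] with i hi
  rw [norm_mul, norm_pow, Real.norm_eq_abs, Real.norm_eq_abs, div_eq_inv_mul]
  gcongr

theorem summable_inv_factorial_mul_mul_pow_pred (R : ℝ) :
    Summable fun i : ℕ => (i ! : ℝ)⁻¹ * (i * R ^ (i - 1)) := by
  refine (summable_nat_add_iff 1).mp ((Real.summable_pow_div_factorial R).congr fun i => ?_)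
  rw [Nat.add_sub_cancel, Nat.factorial_succ]
  push_cast
  field_simp

theorem hasDerivAt_tsum_mul_pow_of_abs_le_inv_factorial
    (ha : ∀ᶠ i in atTop, |a i| ≤ (i ! : ℝ)⁻¹) (x : ℝ) :
    HasDerivAt (fun y => ∑' i, a i * y ^ i) (∑' i, a i * (i * x ^ (i - 1))) x := by
  set R := |x| + 1
  have hu : Summable fun i : ℕ => |a i| * (i * R ^ (i - 1)) := by
    refine .of_norm_bounded_eventually_nat (summable_inv_factorial_mul_mul_pow_pred R) ?_
    filter_upwards [ha] with i hi
    rw [Real.norm_eq_abs, abs_of_nonneg (by positivity)]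
    gcongr
  refine hasDerivAt_tsum_of_isPreconnected hu isOpen_ball (convex_ball 0 R).isPreconnected
    (fun i y _ => (hasDerivAt_pow i y).const_mul (a i)) (fun i y hy => ?_)
    (mem_ball_self (by positivity)) (summable_mul_pow_of_abs_le_inv_factorial ha 0)
    (by simp [R])
  rw [mem_ball_zero_iff, Real.norm_eq_abs] at hy
  rw [norm_mul, norm_mul, norm_pow, Real.norm_eq_abs, Real.norm_eq_abs, Nat.abs_cast]
  gcongr
  exact hy.le

end PowerSeries

noncomputable def besselCoeff (v : ℝ) (i : ℕ) : ℝ :=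
  (Gamma (i + 1) * Gamma (v + i + 1))⁻¹

noncomputable def besselSeries (v y : ℝ) : ℝ :=
  ∑' i, besselCoeff v i * y ^ i

/-- `scaledBesselI v x = x^{v/2} I_v(2√x)` for `x > 0`. -/
noncomputable def scaledBesselI (v x : ℝ) : ℝ :=
  x ^ v * besselSeries v x

theorem besselCoeff_sub_one (v : ℝ) (i : ℕ) :
    besselCoeff (v - 1) i = (v + i) * besselCoeff v i := by
  unfold besselCoeff
  rw [show v - 1 + i + 1 = v + i by ring]
  rcases eq_or_ne (v + i) 0 with h | h
  · rw [h, Gamma_zero, mul_zero, inv_zero, zero_mul]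
  · rw [Gamma_add_one h, mul_left_comm, mul_inv, mul_inv, mul_inv, ← mul_assoc, mul_inv_cancel₀ h,
      one_mul]

theorem abs_besselCoeff_le_inv_factorial (v : ℝ) :
    ∀ᶠ i in atTop, |besselCoeff v i| ≤ (i ! : ℝ)⁻¹ := by
  obtain ⟨N, hN⟩ := exists_nat_ge (1 - v)
  filter_upwards [eventually_ge_atTop N] with i hi
  have hvi : 2 ≤ v + i + 1 := by
    have : (N : ℝ) ≤ i := by exact_mod_cast hi
    linarith
  have hGamma : 1 ≤ Gamma (v + i + 1) := by
    simpa [Gamma_two] using Gamma_strictMonoOn_Ici.monotoneOn (mem_Ici.mpr le_rfl) hvi hvi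
  rw [besselCoeff, Gamma_nat_eq_factorial, abs_of_nonneg (by positivity), mul_inv]
  exact mul_le_of_le_one_right (by positivity) (inv_le_one_of_one_le₀ hGamma)

theorem summable_besselCoeff_mul_pow (v y : ℝ) : Summable fun i => besselCoeff v i * y ^ i :=
  summable_mul_pow_of_abs_le_inv_factorial (abs_besselCoeff_le_inv_factorial v) y

theorem hasDerivAt_scaledBesselI (v : ℝ) {x : ℝ} (hx : 0 < x) :
    HasDerivAt (scaledBesselI v) (scaledBesselI (v - 1) x) x := by
  have hS := hasDerivAt_tsum_mul_pow_of_abs_le_inv_factorial (abs_besselCoeff_le_inv_factorial v) x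
  set S' := ∑' i, besselCoeff v i * (i * x ^ (i - 1))
  have hxS' : x * S' = besselSeries (v - 1) x - v * besselSeries v x := by
    rw [besselSeries, besselSeries, ← tsum_mul_left, ← tsum_mul_left,
      ← (summable_besselCoeff_mul_pow (v - 1) x).tsum_sub
        ((summable_besselCoeff_mul_pow v x).mul_left v)]
    refine tsum_congr fun i => ?_
    rw [besselCoeff_sub_one]
    cases i with
    | zero => simp
    | succ j => rw [Nat.add_sub_cancel]; push_cast; ring
  refine ((hasDerivAt_rpow_const (p := v) (Or.inl hx.ne')).mul hS).congr_deriv ?_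
  rw [scaledBesselI, show x ^ v = x ^ (v - 1) * x by rw [← rpow_add_one hx.ne', sub_add_cancel]]
  unfold besselSeries at hxS' ⊢
  linear_combination x ^ (v - 1) * hxS'

theorem wBessel_eq_exp_mul_scaledBesselI (v c : ℝ) {x : ℝ} (hx : 0 < x) :
    wBessel v c x = exp (-c * x) * scaledBesselI v x := by
  have hsqrt : sqrt x ^ v = x ^ (v / 2) := by
    rw [sqrt_eq_rpow, ← rpow_mul hx.le, one_div_mul_eq_div]
  have hsq : (2 * sqrt x) ^ 2 / 4 = x := by rw [mul_pow, sq_sqrt hx.le]; ring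
  rw [wBessel, besselI, scaledBesselI, besselSeries, mul_div_cancel_left₀ _ two_ne_zero, hsq,
    hsqrt, show x ^ v = x ^ (v / 2) * x ^ (v / 2) by rw [← rpow_add hx, add_halves]]
  simp only [besselCoeff, div_eq_inv_mul]
  ring

theorem hasDerivAt_wBessel (v c : ℝ) {x : ℝ} (hx : 0 < x) :
    HasDerivAt (wBessel v c) (wBessel (v - 1) c x - c * wBessel v c x) x := by
  have hexp : HasDerivAt (fun y => exp (-c * y)) (exp (-c * x) * -c) x := by
    simpa using ((hasDerivAt_id x).const_mul (-c)).exp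
  have heq : (fun y => exp (-c * y) * scaledBesselI v y) =ᶠ[𝓝 x] wBessel v c := by
    filter_upwards [Ioi_mem_nhds hx] with y hy
    exact (wBessel_eq_exp_mul_scaledBesselI v c hy).symm
  refine ((hexp.mul (hasDerivAt_scaledBesselI v hx)).congr_of_eventuallyEq heq.symm).congr_deriv ?_
  rw [wBessel_eq_exp_mul_scaledBesselI _ _ hx, wBessel_eq_exp_mul_scaledBesselI _ _ hx]
  ring

theorem contDiffOn_wBessel (n : ℕ) (v c : ℝ) : ContDiffOn ℝ n (wBessel v c) (Ioi 0) := by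
  induction n generalizing v with
  | zero =>
    exact contDiffOn_zero.mpr fun x hx =>
      (hasDerivAt_wBessel v c hx).continuousAt.continuousWithinAt
  | succ n ih =>
    rw [Nat.cast_succ, contDiffOn_succ_iff_deriv_of_isOpen isOpen_Ioi]
    refine ⟨fun x hx => (hasDerivAt_wBessel v c hx).differentiableAt.differentiableWithinAt,
      by simp, ((ih (v - 1)).sub ((ih v).const_smul c)).congr fun x hx => ?_⟩
    exact (hasDerivAt_wBessel v c hx).deriv

theorem iteratedDeriv_succ_wBessel (n : ℕ) (v c : ℝ) {x : ℝ} (hx : 0 < x) :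
    iteratedDeriv (n + 1) (wBessel v c) x =
      iteratedDeriv n (wBessel (v - 1) c) x - c * iteratedDeriv n (wBessel v c) x := by
  have hderiv : deriv (wBessel v c) =ᶠ[𝓝 x] fun y => wBessel (v - 1) c y - c * wBessel v c y := by
    filter_upwards [Ioi_mem_nhds hx] with y hy
    exact (hasDerivAt_wBessel v c hy).deriv
  have hcont (w : ℝ) : ContDiffAt ℝ n (wBessel w c) x :=
    (contDiffOn_wBessel n w c).contDiffAt (Ioi_mem_nhds hx)
  rw [iteratedDeriv_succ', hderiv.iteratedDeriv_eq,
    iteratedDeriv_fun_sub (g := fun y => c * wBessel v c y) (hcont _)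
      (contDiffAt_const.mul (hcont v)),
    iteratedDeriv_const_mul_field]

theorem Qt_parameter_shift_general (n : ℕ) (α c x : ℝ) (hc : 0 < c) (hx : 0 < x) :
    Qt n (α + 1) c x = (1 / c) * Qt n α c x - (1 / c) * Qt (n + 1) α c x := by
  have hshift := iteratedDeriv_succ_wBessel n (α + 1 + n) c hx
  rw [show α + 1 + n - 1 = α + n by ring] at hshift
  have hindex : α + ((n + 1 : ℕ) : ℝ) = α + 1 + n := by push_cast; ring
  simp only [Qt, hindex, hshift]
  field_simp
  ring

theorem Qt_parameter_shift (n : ℕ) (α c x : ℝ) (hα : -1 < α) (hc : 0 < c) (hx : 0 < x) :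
    Qt n (α + 1) c x = (1 / c) * Qt n α c x - (1 / c) * Qt (n + 1) α c x :=
  Qt_parameter_shift_general n α c x hc hx
end
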